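/- Let A be an n×n complex matrix with all eigenvalues in the open unit disc and B an n×m complex matrix such that A Aᴴ + B Bᴴ = I. Then the series ∑_{k=0}^{∞} A^k B Bᴴ (Aᴴ)^k is summable with sum equal to the identity matrix: ∑_{k=0}^{∞} A^k B Bᴴ (Aᴴ)^k = I. Equivalently, the controllability operator Υ = [B, A B, A² B, …] is a co-isometry, Υ Υ* = I. -/

import Mathlib

/-!
Since `A Aᴴ + B Bᴴ = 1`, each term telescopes:
`Aᵏ B Bᴴ (Aᴴ)ᵏ = Aᵏ (Aᴴ)ᵏ - Aᵏ⁺¹ (Aᴴ)ᵏ⁺¹`, so the `N`-th partial sum is `1 - Aᴺ (Aᴴ)ᴺ`.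
By Gelfand's formula, spectral radius `< 1` makes `‖Aᵏ‖` geometrically small, which gives both
absolute summability of the series and `Aᴺ (Aᴴ)ᴺ → 0`.
-/

open Matrix Filter Topology

theorem sum_range_pow_mul_mul_pow_eq_sub {R : Type*} [Ring R] {a a' c : R}
    (h : a * a' + c = 1) (N : ℕ) :
    ∑ k ∈ Finset.range N, a ^ k * c * a' ^ k = 1 - a ^ N * a' ^ N := by
  have hterm (k : ℕ) : a ^ k * c * a' ^ k = a ^ k * a' ^ k - a ^ (k + 1) * a' ^ (k + 1) := by
    rw [eq_sub_of_add_eq' h, pow_succ, pow_succ']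
    noncomm_ring
  simp_rw [hterm, Finset.sum_range_sub', pow_zero, one_mul]

theorem hasSum_pow_mul_mul_pow_of_mul_add_eq_one {R : Type*} [NormedRing R] [CompleteSpace R]
    {a a' c : R} (ha : Summable fun k => ‖a ^ k‖) (ha' : Tendsto (a' ^ ·) atTop (𝓝 0))
    (h : a * a' + c = 1) : HasSum (fun k => a ^ k * c * a' ^ k) 1 := by
  have hsum : Summable fun k => a ^ k * c * a' ^ k := by
    refine (ha.mul_left ‖c‖).of_norm_bounded_eventually_nat ?_
    filter_upwards [(tendsto_norm_zero.comp ha').eventually_le_const one_pos] with k hk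
    calc ‖a ^ k * c * a' ^ k‖ ≤ ‖a ^ k‖ * ‖c‖ * ‖a' ^ k‖ := norm_mul₃_le
      _ ≤ ‖a ^ k‖ * ‖c‖ * 1 := by gcongr; exact hk
      _ = ‖c‖ * ‖a ^ k‖ := by ring
  have ha0 : Tendsto (a ^ ·) atTop (𝓝 0) :=
    tendsto_zero_iff_norm_tendsto_zero.mpr ha.tendsto_atTop_zero
  rw [hsum.hasSum_iff_tendsto_nat]
  simp_rw [sum_range_pow_mul_mul_pow_eq_sub h]
  simpa using tendsto_const_nhds.sub (ha0.mul ha')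

section ComplexBanachAlgebra

variable {A : Type*} [NormedRing A] [NormedAlgebra ℂ A] [CompleteSpace A]

theorem spectralRadius_lt_one_of_forall_norm_lt_one {a : A}
    (ha : ∀ μ ∈ spectrum ℂ a, ‖μ‖ < 1) : spectralRadius ℂ a < 1 := by
  rcases (spectrum ℂ a).eq_empty_or_nonempty with h | h
  · simp [spectralRadius, h]
  · simpa using spectrum.spectralRadius_lt_of_forall_lt_of_nonempty h (r := 1)
      fun μ hμ => by simpa [← NNReal.coe_lt_coe] using ha μ hμ

theorem summable_norm_pow_of_spectralRadius_lt_one {a : A} (ha : spectralRadius ℂ a < 1) :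
    Summable fun k => ‖a ^ k‖ := by
  obtain ⟨r, hr, hr1⟩ := ENNReal.lt_iff_exists_nnreal_btwn.mp ha
  refine (summable_geometric_of_lt_one r.coe_nonneg (by exact_mod_cast hr1))
    |>.of_norm_bounded_eventually_nat ?_
  have hgelfand := spectrum.pow_nnnorm_pow_one_div_tendsto_nhds_spectralRadius a
  filter_upwards [hgelfand.eventually_lt_const hr, eventually_ge_atTop 1] with k hk hk1
  have := ENNReal.rpow_lt_rpow hk (by positivity : (0 : ℝ) < k)
  rw [← ENNReal.rpow_mul, one_div, inv_mul_cancel₀ (by positivity), ENNReal.rpow_one,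
    ENNReal.rpow_natCast] at this
  rw [norm_norm]
  exact_mod_cast this.le

end ComplexBanachAlgebra

attribute [local instance] Matrix.frobeniusNormedRing Matrix.frobeniusNormedAlgebra

/-- If `A` is stable and `A Aᴴ + B Bᴴ = I`, then `∑ₖ Aᵏ B Bᴴ (Aᴴ)ᵏ = I`;
equivalently, the controllability operator `Υ = [B, AB, A²B, …]` is a
co-isometry. -/
theorem stmt_15 {n m : ℕ}
    (A : Matrix (Fin n) (Fin n) ℂ) (B : Matrix (Fin n) (Fin m) ℂ)
    (hA : ∀ μ ∈ spectrum ℂ A, ‖μ‖ < 1)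
    (hAB : A * Aᴴ + B * Bᴴ = 1) :
    HasSum (fun k : ℕ => A ^ k * (B * Bᴴ) * Aᴴ ^ k) 1 := by
  have hsum := summable_norm_pow_of_spectralRadius_lt_one
    (spectralRadius_lt_one_of_forall_norm_lt_one hA)
  have hA0 : Tendsto (A ^ ·) atTop (𝓝 0) :=
    tendsto_zero_iff_norm_tendsto_zero.mpr hsum.tendsto_atTop_zero
  have hAH0 : Tendsto (Aᴴ ^ ·) atTop (𝓝 0) := by
    simpa [Function.comp_def, star_eq_conjTranspose, conjTranspose_pow]
      using (continuous_star.tendsto 0).comp hA0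
  exact hasSum_pow_mul_mul_pow_of_mul_add_eq_one hsum hAH0 hAB
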